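/- Let V be a finite dimensional real inner product space with inner products g₀ and g₁ (viewed as symmetric positive definite bilinear forms) satisfying ‖g₁ − g₀‖_{g₀} ≤ 1/2, where ‖·‖_{g₀} is the Frobenius norm induced by g₀ on symmetric bilinear forms. Then for every symmetric bilinear form h on V, |tr_{g₁}(h) − tr_{g₀}(h)| ≤ 2 · ‖g₁ − g₀‖_{g₀} · ‖h‖_{g₀}, where tr_g(h) denotes the trace of h with respect to g. -/
import Mathlib

open Matrix

/-- The Frobenius norm of a real matrix. -/
noncomputable def frobNorm {n : ℕ} (A : Matrix (Fin n) (Fin n) ℝ) : ℝ :=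
  Real.sqrt (∑ i, ∑ j, (A i j) ^ 2)

attribute [local instance] Matrix.frobeniusSeminormedAddCommGroup

lemma frobNorm_eq_norm {n : ℕ} (A : Matrix (Fin n) (Fin n) ℝ) : frobNorm A = ‖A‖ := by
  rw [frobNorm, Matrix.frobenius_norm_def, Real.sqrt_eq_rpow]
  congr 1
  refine Finset.sum_congr rfl fun i _ => Finset.sum_congr rfl fun j _ => ?_
  rw [show ((2:ℝ)) = ((2:ℕ):ℝ) by norm_num, Real.rpow_natCast]
  simp [Real.norm_eq_abs, sq_abs]

lemma frobNorm_nonneg {n : ℕ} (A : Matrix (Fin n) (Fin n) ℝ) : 0 ≤ frobNorm A :=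
  Real.sqrt_nonneg _

lemma frobNorm_mul_le {n : ℕ} (A B : Matrix (Fin n) (Fin n) ℝ) :
    frobNorm (A * B) ≤ frobNorm A * frobNorm B := by
  simp only [frobNorm_eq_norm]; exact Matrix.frobenius_norm_mul A B

lemma frobNorm_triangle {n : ℕ} (A B : Matrix (Fin n) (Fin n) ℝ) :
    frobNorm (A + B) ≤ frobNorm A + frobNorm B := by
  simp only [frobNorm_eq_norm]; exact norm_add_le A B

lemma abs_trace_mul_le {n : ℕ} (A B : Matrix (Fin n) (Fin n) ℝ) :
    |Matrix.trace (A * B)| ≤ frobNorm A * frobNorm B := by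
  have htr : Matrix.trace (A * B) = ∑ p : Fin n × Fin n, A p.1 p.2 * B p.2 p.1 := by
    simp only [Matrix.trace, Matrix.diag, Matrix.mul_apply]
    rw [Fintype.sum_prod_type]
  have hcs := Finset.sum_mul_sq_le_sq_mul_sq Finset.univ
      (fun p : Fin n × Fin n => A p.1 p.2) (fun p : Fin n × Fin n => B p.2 p.1)
  have hA : ∑ p : Fin n × Fin n, A p.1 p.2 ^ 2 = ∑ i, ∑ j, (A i j) ^ 2 := by
    rw [Fintype.sum_prod_type]
  have hB : ∑ p : Fin n × Fin n, B p.2 p.1 ^ 2 = ∑ i, ∑ j, (B i j) ^ 2 := by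
    rw [Fintype.sum_prod_type, Finset.sum_comm]
  calc |Matrix.trace (A * B)| = Real.sqrt (Matrix.trace (A * B) ^ 2) := (Real.sqrt_sq_eq_abs _).symm
    _ ≤ Real.sqrt ((∑ i, ∑ j, (A i j) ^ 2) * (∑ i, ∑ j, (B i j) ^ 2)) := by
        apply Real.sqrt_le_sqrt; rw [htr]; rw [hA, hB] at hcs; exact hcs
    _ = frobNorm A * frobNorm B := by
        rw [frobNorm, frobNorm, Real.sqrt_mul]
        positivity

/-- Bär–Hanke, Lemma 3.4 (expressed in a `g₀`-orthonormal basis of the finite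
dimensional vector space `V`, so that `g₀` is the identity matrix): if `g₁` is a
second scalar product (a symmetric positive definite matrix) with
`‖g₁ - g₀‖_{g₀} ≤ 1/2`, then for every symmetric bilinear form `h`,
`|tr_{g₁}(h) - tr_{g₀}(h)| ≤ 2 ‖g₁ - g₀‖_{g₀} ‖h‖_{g₀}`, where
`tr_g(h) = trace (g⁻¹ h)`. -/
theorem trace_comparison
    {n : ℕ} (g₁ h : Matrix (Fin n) (Fin n) ℝ)
    (hg₁sym : g₁.IsSymm) (hg₁pd : g₁.PosDef) (hhsym : h.IsSymm)
    (hclose : frobNorm (g₁ - 1) ≤ 1/2) :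
    |Matrix.trace (g₁⁻¹ * h) - Matrix.trace h| ≤ 2 * frobNorm (g₁ - 1) * frobNorm h := by
  have hinv : g₁⁻¹ * g₁ = 1 := Matrix.nonsing_inv_mul g₁ (isUnit_iff_ne_zero.mpr hg₁pd.det_pos.ne')
  set E := g₁ - 1 with hE
  set X := g₁⁻¹ - 1 with hX
  -- X = -E - X * E
  have key : X = -E + -(X * E) := by
    have h2 : X * E = 1 - g₁⁻¹ - E := by
      rw [hX, hE, sub_mul, mul_sub, hinv, one_mul, mul_one]
    rw [h2, hX, hE]; abel
  have hXnorm : frobNorm X ≤ 2 * frobNorm E := by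
    have h1 : frobNorm X ≤ frobNorm E + frobNorm X * frobNorm E := by
      calc frobNorm X = frobNorm (-E + -(X * E)) := by rw [← key]
        _ ≤ frobNorm (-E) + frobNorm (-(X * E)) := frobNorm_triangle _ _
        _ = frobNorm E + frobNorm (X * E) := by
            simp only [frobNorm_eq_norm, norm_neg]
        _ ≤ frobNorm E + frobNorm X * frobNorm E := by
            linarith [frobNorm_mul_le X E]
    nlinarith [frobNorm_nonneg X, frobNorm_nonneg E]
  have htr : Matrix.trace (g₁⁻¹ * h) - Matrix.trace h = Matrix.trace (X * h) := by
    rw [hX, sub_mul, one_mul, Matrix.trace_sub]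
  rw [htr]
  calc |Matrix.trace (X * h)| ≤ frobNorm X * frobNorm h := abs_trace_mul_le X h
    _ ≤ 2 * frobNorm E * frobNorm h := by
        have := frobNorm_nonneg h
        nlinarith
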